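/- arXiv:1703.02288 — 2 statements merged into one kernel-verified Lean document; each statement's English description precedes it below -/
import Mathlib

section
/- Let X be a finite discrete space with at least two elements, Γ a nonempty set, and φ : Γ → Γ. The following are equivalent: (1) (X^Γ, σ_φ) has the weak specification property; (2) (X^Γ, σ_φ) has the almost weak specification property; (3) φ has no periodic point. -/
/-!
If `φ` has a periodic point `λ` of period `m`, every `σ_φ`-iterate by a multiple of `m` reads
the coordinate `λ` off the same place, so no point can shadow the constant configuration `a`
at time `0` and the constant `b ≠ a` during a later window of length `m`, however long the gap.

Conversely, if `φ` has no periodic point then every `φ`-orbit is injective, so for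
`γ, γ' ∈ H` there is at most one lag `d` with `φ^[a] γ = φ^[a + d] γ'`. Beyond the largest
such lag over the finite set `H`, the sets `⋃_{l_j ≤ i ≤ k_j} φ^[i] '' H` are pairwise disjoint,
and the shadowing point is obtained by copying `y j` onto the `j`-th of them.
-/

open Filter

/-- The generalized shift `σ_φ` on `X^Γ`. -/
def genShift {X Γ : Type*} (φ : Γ → Γ) (x : Γ → X) : Γ → X := fun γ => x (φ γ)

/-- The basic entourage `α_H` of agreement on `H ⊆ Γ`. -/
def agreeEnt (X : Type*) {Γ : Type*} (H : Set Γ) : Set ((Γ → X) × (Γ → X)) :=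
  {p | ∀ γ ∈ H, p.1 γ = p.2 γ}

/-- Membership in the unique compatible uniform structure `𝒰` on `X^Γ`:
`D` contains some `α_H` with `H ⊆ Γ` finite. -/
def IsProdEntourage (X : Type*) {Γ : Type*} (D : Set ((Γ → X) × (Γ → X))) : Prop :=
  ∃ H : Set Γ, H.Finite ∧ agreeEnt X H ⊆ D

/-- Almost weak specification property for `(X^Γ, σ_φ)`. -/
def AlmostWeakSpec {X Γ : Type*} (φ : Γ → Γ) : Prop :=
  ∀ D : Set ((Γ → X) × (Γ → X)), IsProdEntourage X D →
    ∃ N : ℕ → ℕ, Tendsto (fun n : ℕ => (N n : ℝ) / (n : ℝ)) atTop (nhds 0) ∧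
      ∀ n : ℕ, 2 ≤ n → ∀ y : ℕ → Γ → X, ∀ l k : ℕ → ℕ,
        (∀ j, j < n → l j ≤ k j) →
        (∀ j, j + 1 < n → k j < l (j + 1) ∧ N (k (j + 1) - l (j + 1)) ≤ l (j + 1) - k j) →
        ∃ x : Γ → X, ∀ j, j < n → ∀ i, l j ≤ i → i ≤ k j →
          ((genShift φ)^[i] x, (genShift φ)^[i] (y j)) ∈ D

/-- Weak specification property for `(X^Γ, σ_φ)`: the gap function is constant. -/
def WeakSpec {X Γ : Type*} (φ : Γ → Γ) : Prop :=
  ∀ D : Set ((Γ → X) × (Γ → X)), IsProdEntourage X D →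
    ∃ N : ℕ,
      ∀ n : ℕ, 2 ≤ n → ∀ y : ℕ → Γ → X, ∀ l k : ℕ → ℕ,
        (∀ j, j < n → l j ≤ k j) →
        (∀ j, j + 1 < n → k j < l (j + 1) ∧ N ≤ l (j + 1) - k j) →
        ∃ x : Γ → X, ∀ j, j < n → ∀ i, l j ≤ i → i ≤ k j →
          ((genShift φ)^[i] x, (genShift φ)^[i] (y j)) ∈ D

/-- Specification property for `(X^Γ, σ_φ)`: weak specification where the tracing
point can be chosen periodic for `σ_φ`. -/
def Spec {X Γ : Type*} (φ : Γ → Γ) : Prop :=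
  ∀ D : Set ((Γ → X) × (Γ → X)), IsProdEntourage X D →
    ∃ N : ℕ,
      ∀ n : ℕ, 2 ≤ n → ∀ y : ℕ → Γ → X, ∀ l k : ℕ → ℕ,
        (∀ j, j < n → l j ≤ k j) →
        (∀ j, j + 1 < n → k j < l (j + 1) ∧ N ≤ l (j + 1) - k j) →
        ∃ x : Γ → X, (∃ m : ℕ, 1 ≤ m ∧ (genShift φ)^[m] x = x) ∧
          ∀ j, j < n → ∀ i, l j ≤ i → i ≤ k j →
            ((genShift φ)^[i] x, (genShift φ)^[i] (y j)) ∈ D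

open Function Set

lemma genShift_iterate_apply {X Γ : Type*} (φ : Γ → Γ) (x : Γ → X) (i : ℕ) (γ : Γ) :
    (genShift φ)^[i] x γ = x (φ^[i] γ) := by
  induction i generalizing x with
  | zero => rfl
  | succ i ih => rw [iterate_succ_apply, ih, iterate_succ_apply']; rfl

lemma periodicPts_eq_empty_iff {Γ : Type*} (φ : Γ → Γ) :
    periodicPts φ = ∅ ↔ ¬ ∃ γ : Γ, ∃ m : ℕ, 1 ≤ m ∧ φ^[m] γ = γ := by
  simp only [eq_empty_iff_forall_notMem, mem_periodicPts, IsPeriodicPt, IsFixedPt]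
  grind

lemma exists_eqOn_of_pairwiseDisjoint {ι α β : Type*} [Nonempty β] {s : Set ι}
    {W : ι → Set α} (hW : s.PairwiseDisjoint W) (y : ι → α → β) :
    ∃ x : α → β, ∀ i ∈ s, EqOn x (y i) (W i) := by
  classical
  refine ⟨fun a => if h : ∃ i ∈ s, a ∈ W i then y h.choose a else Classical.arbitrary β,
    fun i hi a ha => ?_⟩
  have h : ∃ i ∈ s, a ∈ W i := ⟨i, hi, ha⟩
  have hchoose : h.choose = i :=
    pairwiseDisjoint_iff.1 hW h.choose_spec.1 hi ⟨a, h.choose_spec.2, ha⟩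
  simp only [dif_pos h, hchoose]

section Aperiodic

variable {Γ : Type*} {φ : Γ → Γ}

lemma iterate_injective_of_periodicPts_eq_empty (hφ : periodicPts φ = ∅) (γ : Γ) :
    Injective (φ^[·] γ) := by
  suffices ∀ m n, m < n → φ^[m] γ ≠ φ^[n] γ from
    fun m n h => by_contra fun hmn => (lt_or_gt_of_ne hmn).elim
      (fun hlt => this m n hlt h) (fun hlt => this n m hlt h.symm)
  intro m n hmn h
  have hper : IsPeriodicPt φ (n - m) (φ^[m] γ) := by
    rw [IsPeriodicPt, IsFixedPt, ← iterate_add_apply, Nat.sub_add_cancel hmn.le, h]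
  exact (eq_empty_iff_forall_notMem.1 hφ) _ (mk_mem_periodicPts (by omega) hper)

lemma lag_unique (hφ : periodicPts φ = ∅) {γ γ' : Γ} {a b d e : ℕ}
    (hd : φ^[a] γ = φ^[a + d] γ') (he : φ^[b] γ = φ^[b + e] γ') : d = e := by
  have : φ^[a + b + d] γ' = φ^[a + b + e] γ' :=
    calc φ^[a + b + d] γ' = φ^[b] (φ^[a + d] γ') := by
          rw [← iterate_add_apply, add_left_comm, add_assoc]
      _ = φ^[a] (φ^[b] γ) := by rw [← hd, ← iterate_add_apply, ← iterate_add_apply, add_comm]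
      _ = φ^[a + b + e] γ' := by rw [he, ← iterate_add_apply, add_assoc]
  have := iterate_injective_of_periodicPts_eq_empty hφ γ' this
  omega

lemma exists_lag_bound (hφ : periodicPts φ = ∅) {H : Set Γ} (hH : H.Finite) :
    ∃ N : ℕ, ∀ γ ∈ H, ∀ γ' ∈ H, ∀ a d, N ≤ d → φ^[a] γ ≠ φ^[a + d] γ' := by
  have hfin : (⋃ γ ∈ H, ⋃ γ' ∈ H, {d : ℕ | ∃ a, φ^[a] γ = φ^[a + d] γ'}).Finite :=
    hH.biUnion fun γ _ => hH.biUnion fun γ' _ => Subsingleton.finite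
      fun _ ⟨_, hd⟩ _ ⟨_, he⟩ => lag_unique hφ hd he
  obtain ⟨N, hN⟩ := hfin.bddAbove
  refine ⟨N + 1, fun γ hγ γ' hγ' a d hd h => ?_⟩
  have := hN (mem_biUnion hγ (mem_biUnion hγ' ⟨a, h⟩))
  omega

lemma pairwiseDisjoint_iterate_windows {N n : ℕ} {H : Set Γ}
    (hN : ∀ γ ∈ H, ∀ γ' ∈ H, ∀ a d, N ≤ d → φ^[a] γ ≠ φ^[a + d] γ') {l k : ℕ → ℕ}
    (hsep : ∀ j j', j < j' → j' < n → k j + N ≤ l j') :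
    (Iio n).PairwiseDisjoint fun j => ⋃ i ∈ Icc (l j) (k j), φ^[i] '' H := by
  have key : ∀ j j', j < j' → j' < n → ∀ i i' γ γ', γ ∈ H → γ' ∈ H →
      i ≤ k j → l j' ≤ i' → φ^[i] γ ≠ φ^[i'] γ' := by
    intro j j' hjj' hj' i i' γ γ' hγ hγ' hi hi'
    have := hsep j j' hjj' hj'
    rw [show i' = i + (i' - i) by omega]
    exact hN γ hγ γ' hγ' i _ (by omega)
  refine pairwiseDisjoint_iff.2 fun j hj j' hj' ⟨δ, hδ, hδ'⟩ => ?_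
  simp only [mem_iUnion, mem_image, mem_Icc] at hδ hδ'
  obtain ⟨i, hi, γ, hγ, rfl⟩ := hδ
  obtain ⟨i', hi', γ', hγ', hδ⟩ := hδ'
  rcases lt_trichotomy j j' with h | h | h
  · exact absurd hδ.symm (key j j' h hj' i i' γ γ' hγ hγ' hi.2 hi'.1)
  · exact h
  · exact absurd hδ (key j' j h hj i' i γ' γ hγ' hγ hi'.2 hi.1)

end Aperiodic

lemma add_le_of_gaps {N n : ℕ} {l k : ℕ → ℕ} (hlk : ∀ j, j < n → l j ≤ k j)
    (hgap : ∀ j, j + 1 < n → k j < l (j + 1) ∧ N ≤ l (j + 1) - k j) :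
    ∀ j j', j < j' → j' < n → k j + N ≤ l j' := by
  intro j j' hjj'
  induction j', hjj' using Nat.le_induction with
  | base => exact fun hj => Nat.add_le_of_le_sub' (hgap j hj).1.le (hgap j hj).2
  | succ j' hjj' ih =>
    intro hj'
    have := ih (by omega)
    have := hlk j' (by omega)
    have := hgap j' hj'
    omega

section Shift

variable {X Γ : Type*} {φ : Γ → Γ}

lemma weakSpec_of_periodicPts_eq_empty [Nonempty X] (hφ : periodicPts φ = ∅) :
    WeakSpec (X := X) φ := by
  rintro D ⟨H, hH, hHD⟩
  obtain ⟨N, hN⟩ := exists_lag_bound hφ hH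
  refine ⟨N, fun n _ y l k hlk hgap => ?_⟩
  obtain ⟨x, hx⟩ := exists_eqOn_of_pairwiseDisjoint
    (pairwiseDisjoint_iterate_windows hN (add_le_of_gaps hlk hgap)) y
  refine ⟨x, fun j hj i hli hik => hHD fun γ hγ => ?_⟩
  simp only [genShift_iterate_apply]
  exact hx j hj (mem_biUnion ⟨hli, hik⟩ (mem_image_of_mem _ hγ))

lemma WeakSpec.almostWeakSpec (h : WeakSpec (X := X) φ) : AlmostWeakSpec (X := X) φ := by
  intro D hD
  obtain ⟨N, hN⟩ := h D hD
  exact ⟨fun _ => N, tendsto_const_div_atTop_nhds_zero_nat (N : ℝ), hN⟩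

lemma AlmostWeakSpec.periodicPts_eq_empty [Nontrivial X] (h : AlmostWeakSpec (X := X) φ) :
    periodicPts φ = ∅ := by
  refine eq_empty_iff_forall_notMem.2 fun γ hγ => ?_
  obtain ⟨m, hm, hper⟩ := mem_periodicPts.1 hγ
  obtain ⟨a, b, hab⟩ := exists_pair_ne X
  obtain ⟨N, -, hspec⟩ := h (agreeEnt X {γ}) ⟨{γ}, finite_singleton γ, subset_rfl⟩
  -- windows `[0, 0]` and `[t, t + m - 1]` with `t` a multiple of `m` beyond the gap `N (m - 1)`
  set t := m * (N (m - 1) + 1)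
  have ht : N (m - 1) + 1 ≤ t := Nat.le_mul_of_pos_left _ hm
  obtain ⟨x, hx⟩ := hspec 2 le_rfl (fun j _ => if j = 0 then a else b)
    (fun j => if j = 0 then 0 else t) (fun j => if j = 0 then 0 else t + (m - 1))
    (fun j hj => by interval_cases j <;> simp)
    (fun j hj => by
      obtain rfl : j = 0 := by omega
      simp only [zero_add, one_ne_zero, if_true, if_false, Nat.add_sub_cancel_left]
      omega)
  have hx0 : x γ = a := by simpa using hx 0 (by omega) 0 le_rfl le_rfl γ rfl
  have hx1 := hx 1 (by omega) t (by simp) (by simp) γ rfl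
  simp only [genShift_iterate_apply, one_ne_zero, if_false] at hx1
  rw [show φ^[t] γ = γ from (hper.mul_const _).eq] at hx1
  exact hab (hx0 ▸ hx1)

end Shift

theorem stmt_6_general {X Γ : Type*} [Nontrivial X] (φ : Γ → Γ) :
    (WeakSpec (X := X) φ ↔ AlmostWeakSpec (X := X) φ) ∧
    (AlmostWeakSpec (X := X) φ ↔ ¬ ∃ lam : Γ, ∃ m : ℕ, 1 ≤ m ∧ φ^[m] lam = lam) := by
  rw [← periodicPts_eq_empty_iff]
  exact ⟨⟨WeakSpec.almostWeakSpec,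
      fun h => weakSpec_of_periodicPts_eq_empty h.periodicPts_eq_empty⟩,
    ⟨AlmostWeakSpec.periodicPts_eq_empty,
      fun h => (weakSpec_of_periodicPts_eq_empty h).almostWeakSpec⟩⟩

/-- equivalence of weak specification, almost weak specification,
and absence of periodic points of `φ`. -/
theorem stmt_6 {X Γ : Type*} [Fintype X] [Nontrivial X] [Nonempty Γ] (φ : Γ → Γ) :
    (WeakSpec (X := X) φ ↔ AlmostWeakSpec (X := X) φ) ∧
    (AlmostWeakSpec (X := X) φ ↔ ¬ ∃ lam : Γ, ∃ m : ℕ, 1 ≤ m ∧ φ^[m] lam = lam) :=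
  stmt_6_general φ
end

section
/- Let X be a finite discrete space with at least two elements, Γ a nonempty set, and φ : Γ → Γ. If the generalized shift σ_φ on X^Γ has the stroboscopical property, then φ is one-to-one. -/
open Filter

/-- `ω_f(A, x)`: limits of convergent subsequences of `(f^[A i] x)_i`. -/
def omegaLimitSet {Z : Type*} [TopologicalSpace Z] (f : Z → Z) (A : ℕ → ℕ) (x : Z) : Set Z :=
  {y | ∃ k : ℕ → ℕ, StrictMono k ∧ Tendsto (fun i => f^[A (k i)] x) atTop (nhds y)}

/-- The stroboscopical property of a dynamical system `(Z, f)`. -/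
def Strob {Z : Type*} [TopologicalSpace Z] (f : Z → Z) : Prop :=
  ∀ z : Z, ∀ A : ℕ → ℕ, StrictMono A → ∃ x : Z, z ∈ omegaLimitSet f A x

/-- The uniform stroboscopical property of `(X^Γ, σ_φ)`: every strictly increasing
sequence `A` has a subsequence `(A (k i))` for which there is `ϱ` with
`σ_φ^[A (k i)] ∘ ϱ → id` uniformly. -/
def UnifStrobShift {X Γ : Type*} (φ : Γ → Γ) : Prop :=
  ∀ A : ℕ → ℕ, StrictMono A → ∃ k : ℕ → ℕ, StrictMono k ∧
    ∃ ρ : (Γ → X) → (Γ → X),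
      ∀ D : Set ((Γ → X) × (Γ → X)), IsProdEntourage X D →
        ∃ N : ℕ, ∀ i, N ≤ i → ∀ z : Γ → X, (z, (genShift φ)^[A (k i)] (ρ z)) ∈ D


lemma genShift_iterate {X Γ : Type*} (φ : Γ → Γ) (x : Γ → X) (n : ℕ) (γ : Γ) :
    (genShift φ)^[n] x γ = x (φ^[n] γ) := by
  induction n generalizing γ with
  | zero => simp
  | succ m ih =>
    rw [Function.iterate_succ_apply', Function.iterate_succ_apply]
    exact ih (φ γ)

/-- if `(X^Γ, σ_φ)` has the stroboscopical property then `φ` is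
one-to-one. -/
theorem stmt_8 {X Γ : Type*} [TopologicalSpace X] [DiscreteTopology X] [Fintype X]
    [Nontrivial X] [Nonempty Γ] (φ : Γ → Γ)
    (h : Strob (genShift (X := X) φ)) : Function.Injective φ := by
  classical
  intro a b hab
  by_contra hne
  obtain ⟨u, v, huv⟩ := exists_pair_ne X
  set z : Γ → X := fun γ => if γ = a then u else v with hz
  have hza : z a = u := by simp [hz]
  have hzb : z b = v := by simp [hz, Ne.symm hne]
  obtain ⟨x, k, hk, htend⟩ := h z (fun i => i + 1) (fun i j hij => by simpa using hij)
  have ha : Tendsto (fun i => (genShift (X := X) φ)^[k i + 1] x a) atTop (nhds (z a)) :=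
    (continuous_apply a).continuousAt.tendsto.comp htend
  have hb : Tendsto (fun i => (genShift (X := X) φ)^[k i + 1] x b) atTop (nhds (z b)) :=
    (continuous_apply b).continuousAt.tendsto.comp htend
  have ha' : ∀ᶠ i in atTop, (genShift (X := X) φ)^[k i + 1] x a = z a := by
    have : {z a} ∈ nhds (z a) := by simp
    exact ha this
  have hb' : ∀ᶠ i in atTop, (genShift (X := X) φ)^[k i + 1] x b = z b := by
    have : {z b} ∈ nhds (z b) := by simp
    exact hb this
  obtain ⟨i, hia, hib⟩ := (ha'.and hb').exists
  have heq : (genShift (X := X) φ)^[k i + 1] x a = (genShift (X := X) φ)^[k i + 1] x b := by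
    rw [genShift_iterate, genShift_iterate, Function.iterate_succ_apply,
      Function.iterate_succ_apply, hab]
  rw [hia, hib, hza, hzb] at heq
  exact huv heq
end
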